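/- Let R be a commutative ring, φ : R → R a flat ring endomorphism, π ∈ R, and M an étale φ-module over R (finite R-module with isomorphic linearization R ⊗_{φ,R} M ≅ M). Let M[π^∞] be the submodule of π-power torsion elements. Then M/M[π^∞] is an étale φ-module over R which is π-torsion free. -/

import Mathlib

open TensorProduct

/-- Type synonym: `M` with the `R`-module structure twisted by `φ` (i.e. `r • m = φ r • m`).
For `M = R` this is "`R` viewed as an `R`-module via `φ`". -/
@[nolint unusedArguments]
def Twist (R : Type*) [CommRing R] (φ : R →+* R) (M : Type*) [AddCommGroup M] [Module R M] :
    Type _ := M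

namespace Twist

variable {R : Type*} [CommRing R] (φ : R →+* R) {M : Type*} [AddCommGroup M] [Module R M]

instance : AddCommGroup (Twist R φ M) := inferInstanceAs (AddCommGroup M)

instance : Module R (Twist R φ M) := Module.compHom M φ

theorem smul_def (r : R) (m : M) :
    (r • (show Twist R φ M from m)) = (show Twist R φ M from (φ r • m)) := rfl

end Twist

/-- The linearization `R ⊗_{φ,R} M → M`, `x ⊗ m ↦ x • φM m`, of a `φ`-semilinear map
`φM : M → M`.  It is `R`-linear when the left tensor factor and the target carry the
`φ`-twisted module structures.  An étale `φ`-module is a finite module `M` for which this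
map is bijective. -/
noncomputable def linearization {R : Type*} [CommRing R] (φ : R →+* R)
    {M : Type*} [AddCommGroup M] [Module R M] (φM : M →ₛₗ[φ] M) :
    TensorProduct R (Twist R φ R) M →ₗ[R] Twist R φ M :=
  TensorProduct.lift
    { toFun := fun x =>
        { toFun := fun m => show Twist R φ M from (show R from x) • φM m
          map_add' := fun a b => by
            show ((show R from x) • φM (a + b) : M) = (show R from x) • φM a + (show R from x) • φM b
            rw [map_add]
            exact smul_add (show R from x) (φM a) (φM b)
          map_smul' := fun r m => by
            show ((show R from x) • φM (r • m) : M) = φ r • ((show R from x) • φM m)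
            rw [LinearMap.map_smulₛₗ, smul_comm] }
      map_add' := fun x y => by
        ext m
        show ((show R from x) + (show R from y)) • φM m = (show R from x) • φM m + (show R from y) • φM m
        exact add_smul _ _ _
      map_smul' := fun r x => by
        ext m
        show (φ r * (show R from x)) • φM m = (φ r • ((show R from x) • φM m) : M)
        exact mul_smul _ _ _ }

/-! The quotient is `π`-torsion free because `π x ∈ M[π^∞]` forces `x ∈ M[π^∞]`. Its
linearization is a quotient of that of `M`, hence surjective. For injectivity, an element of
the kernel lifts to some `w` with `π ^ n • linearization φM w = 0`; as `φ π = π` this gives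
`π ^ n • w = 0` by injectivity for `M`, and `π ^ n` stays regular on `R ⊗_{φ,R} (M/M[π^∞])`
because `φ` is flat. -/

namespace Submodule

def torsionByPow (R M : Type*) [CommRing R] [AddCommGroup M] [Module R M] (π : R) :
    Submodule R M :=
  ⨆ n : ℕ, torsionBy R M (π ^ n)

variable {R M : Type*} [CommRing R] [AddCommGroup M] [Module R M] (π : R)

theorem mem_torsionByPow_iff {x : M} : x ∈ torsionByPow R M π ↔ ∃ n : ℕ, π ^ n • x = 0 := by
  have hmono : Monotone fun n : ℕ => torsionBy R M (π ^ n) := fun _ _ hmn =>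
    torsionBy_le_torsionBy_of_dvd _ _ (pow_dvd_pow π hmn)
  simp only [torsionByPow, mem_iSup_of_directed _ hmono.directed_le, mem_torsionBy_iff]

theorem isSMulRegular_quotient_torsionByPow : IsSMulRegular (M ⧸ torsionByPow R M π) π := by
  refine IsSMulRegular.of_right_eq_zero_of_smul fun x hx => ?_
  obtain ⟨m, rfl⟩ := Quotient.mk_surjective _ x
  rw [← Quotient.mk_smul, Quotient.mk_eq_zero, mem_torsionByPow_iff] at hx
  obtain ⟨n, hn⟩ := hx
  rw [Quotient.mk_eq_zero, mem_torsionByPow_iff]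
  exact ⟨n + 1, by rwa [pow_succ, mul_smul]⟩

end Submodule

section Linearization

open Submodule

variable {R : Type*} [CommRing R] {φ : R →+* R}
  {M N : Type*} [AddCommGroup M] [Module R M] [AddCommGroup N] [Module R N]
  {φM : M →ₛₗ[φ] M} {φN : N →ₛₗ[φ] N}

theorem linearization_lTensor (f : M →ₗ[R] N) (hf : ∀ m, φN (f m) = f (φM m))
    (w : Twist R φ R ⊗[R] M) :
    (linearization φ φN (f.lTensor (Twist R φ R) w) : N) = f (linearization φ φM w) := by
  induction w using TensorProduct.induction_on with
  | zero => exact (map_zero f).symm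
  | tmul x m =>
    show (show R from x) • φN (f m) = f ((show R from x) • φM m)
    rw [hf, map_smul]
  | add v w hv hw =>
    simp only [map_add, hv, hw]
    exact (map_add f _ _).symm

theorem linearization_surjective_of_surjective {f : M →ₗ[R] N} (hf_surj : Function.Surjective f)
    (hf : ∀ m, φN (f m) = f (φM m)) (h : Function.Surjective (linearization φ φM)) :
    Function.Surjective (linearization φ φN) := by
  intro n
  obtain ⟨m, rfl⟩ := hf_surj n
  obtain ⟨w, hw⟩ := h m
  exact ⟨f.lTensor _ w, by rw [linearization_lTensor f hf, hw]⟩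

theorem linearization_injective_quotient_torsionByPow [Module.Flat R (Twist R φ R)] {π : R}
    (hπ : φ π = π) (hφM : Function.Injective (linearization φ φM))
    {ψ : (M ⧸ torsionByPow R M π) →ₛₗ[φ] (M ⧸ torsionByPow R M π)}
    (hψ : ∀ m, ψ (Submodule.Quotient.mk m) = Submodule.Quotient.mk (φM m)) :
    Function.Injective (linearization φ ψ) := by
  refine (injective_iff_map_eq_zero _).2 fun z hz => ?_
  obtain ⟨w, rfl⟩ := LinearMap.lTensor_surjective (Twist R φ R) (mkQ_surjective _) z
  rw [linearization_lTensor _ hψ] at hz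
  obtain ⟨n, hn⟩ := (mem_torsionByPow_iff π).1
    ((Quotient.mk_eq_zero _ (x := show M from linearization φ φM w)).1 hz)
  have hw : π ^ n • w = 0 := hφM <| by
    rw [map_smul, map_zero]
    show φ (π ^ n) • (show M from linearization φ φM w) = 0
    rw [map_pow, hπ, hn]
  have hreg : IsSMulRegular (Twist R φ R ⊗[R] (M ⧸ torsionByPow R M π)) (π ^ n) :=
    ((isSMulRegular_quotient_torsionByPow π).pow n).lTensor _
  exact hreg.right_eq_zero_of_smul (by rw [← map_smul, hw, map_zero])

end Linearization

/-- Let `R` be a commutative ring, `φ` a flat endomorphism fixing `π`, and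
`M` an étale `φ`-module over `R`.  Let `M[π^∞] = ⋃_n M[π^n]` be the `π`-power torsion
submodule.  Then `M/M[π^∞]` is a `π`-torsion-free étale `φ`-module: the quotient has no
`π`-torsion, and any semilinear endomorphism of it induced from `φM` is finite with bijective
linearization. -/
theorem statement_3 {R : Type*} [CommRing R] (φ : R →+* R)
    (hflat : Module.Flat R (Twist R φ R))
    {M : Type*} [AddCommGroup M] [Module R M] [Module.Finite R M]
    (φM : M →ₛₗ[φ] M)
    (hetale : Function.Bijective (linearization φ φM))
    (π : R) (hπ : φ π = π)
    (Mtor : Submodule R M)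
    (hMtor : Mtor = ⨆ n : ℕ, Submodule.torsionBy R M (π ^ n)) :
    (∀ x : M ⧸ Mtor, π • x = 0 → x = 0) ∧
    ∀ ψ : (M ⧸ Mtor) →ₛₗ[φ] (M ⧸ Mtor),
      (∀ m : M, ψ (Submodule.Quotient.mk m) = Submodule.Quotient.mk (φM m)) →
      Module.Finite R (M ⧸ Mtor) ∧ Function.Bijective (linearization φ ψ) := by
  change Mtor = Submodule.torsionByPow R M π at hMtor
  subst hMtor
  have := hflat
  refine ⟨fun _ => (Submodule.isSMulRegular_quotient_torsionByPow π).right_eq_zero_of_smul,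
    fun ψ hψ => ⟨inferInstance, ?_, ?_⟩⟩
  · exact linearization_injective_quotient_torsionByPow hπ hetale.1 hψ
  · exact linearization_surjective_of_surjective (Submodule.mkQ_surjective _) hψ hetale.2
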